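/- arXiv:2410.10460 — 2 statements merged into one kernel-verified Lean document; each statement's English description precedes it below -/
import Mathlib

section
/- (Projection-based shield synthesis.) Let T be an n-agent LTS with projections prj_i and let φ = ∩_{i=1}^n φ_i be an n-agent safety property. For each i ∈ {1,...,n}, let σ_i be a local shield of agent i, i.e., a shield for the projected LTS T^i with respect to r-prj_i(φ_i). Define the action filter F(s) = ∩_{i=1}^n ext(σ_i)(s). Then every run of the filtered LTS T_F that starts in a state s such that prj_i(s) is winning for r-prj_i(φ_i) in T^i for every i is safe with respect to φ. -/
/-- The enabled actions in a state of an LTS with transition relation `Tr`. -/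
def Enabled {S A : Type*} (Tr : S → A → S → Prop) (s : S) : Set A :=
  {a | ∃ s', Tr s a s'}

/-- The transition relation has no dead ends. -/
def NoDeadEnds {S A : Type*} (Tr : S → A → S → Prop) : Prop :=
  ∀ s, ∃ a s', Tr s a s'

/-- A (nondeterministic) strategy: nonempty sets of enabled actions. -/
def IsStrategy {S A : Type*} (Tr : S → A → S → Prop) (σ : S → Set A) : Prop :=
  ∀ s, (σ s).Nonempty ∧ σ s ⊆ Enabled Tr s

/-- An (infinite) run of the LTS: alternating states and actions following `Tr`. -/
def IsRun {S A : Type*} (Tr : S → A → S → Prop) (st : ℕ → S) (ac : ℕ → A) : Prop :=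
  ∀ i, Tr (st i) (ac i) (st (i + 1))

/-- A run is an outcome of a strategy if every action is allowed by the strategy. -/
def IsOutcome {S A : Type*} (σ : S → Set A) (st : ℕ → S) (ac : ℕ → A) : Prop :=
  ∀ i, ac i ∈ σ (st i)

/-- A run is safe w.r.t. a safety property `φ` if all its states lie in `φ`. -/
def SafeRun {S : Type*} (φ : Set S) (st : ℕ → S) : Prop :=
  ∀ i, st i ∈ φ

/-- A state is winning for `φ` if some strategy has only safe outcomes from it. -/
def WinningState {S A : Type*} (Tr : S → A → S → Prop) (φ : Set S) (s : S) : Prop :=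
  ∃ σ, IsStrategy Tr σ ∧
    ∀ st ac, IsRun Tr st ac → IsOutcome σ st ac → st 0 = s → SafeRun φ st

/-- A shield for `φ`: a strategy all of whose outcomes starting in any winning
state are safe. -/
def IsShield {S A : Type*} (Tr : S → A → S → Prop) (φ : Set S) (σ : S → Set A) : Prop :=
  IsStrategy Tr σ ∧
    ∀ st ac, IsRun Tr st ac → IsOutcome σ st ac →
      WinningState Tr φ (st 0) → SafeRun φ st

/-- The transition relation filtered by an action filter `F` (e.g. a shield):
only transitions whose action is allowed by `F` are kept. -/
def FilterTr {S A : Type*} (Tr : S → A → S → Prop) (F : S → Set A) :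
    S → A → S → Prop :=
  fun s a s' => Tr s a s' ∧ a ∈ F s

/-- The projection of a global state (a vector over variables `V`) to the
coordinates in `I`. -/
def Prj {V : Type*} {D : V → Type*} (I : Set V) (s : ∀ v, D v) :
    ∀ v : I, D (v : V) :=
  fun v => s v.1

/-- The extension of a set `ψ` of observations: all global states whose
projection lies in `ψ` (the union of the extensions `⟨o⟩` of its elements). -/
def ExtSet {V : Type*} {D : V → Type*} (I : Set V)
    (ψ : Set (∀ v : I, D (v : V))) : Set (∀ v, D v) :=
  {s | Prj I s ∈ ψ}

/-- The restricted projection of `φ`: those observations `o` whose extension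
`⟨o⟩ = {s | Prj I s = o}` is entirely contained in `φ`. -/
def RPrj {V : Type*} {D : V → Type*} (I : Set V) (φ : Set (∀ v, D v)) :
    Set (∀ v : I, D (v : V)) :=
  {o | ∀ s, Prj I s = o → s ∈ φ}

/-- The transition relation of the projected LTS `T^i` of agent `i`, which
observes the coordinates in `I` and controls the `i`-th action component. -/
def ProjTr {V : Type*} {D : V → Type*} {n : ℕ} {Act : Fin n → Type*}
    (Tr : (∀ v, D v) → (∀ i, Act i) → (∀ v, D v) → Prop)
    (I : Set V) (i : Fin n) :
    (∀ v : I, D (v : V)) → Act i → (∀ v : I, D (v : V)) → Prop :=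
  fun o b o' => ∃ s a s', Tr s a s' ∧ Prj I s = o ∧ a i = b ∧ Prj I s' = o'

/-- The extended shield of a local strategy `σi` of agent `i`: it allows all
global actions whose `i`-th component is allowed by `σi` in the projection. -/
def ExtShield {V : Type*} {D : V → Type*} {n : ℕ} {Act : Fin n → Type*}
    (I : Set V) (i : Fin n)
    (σi : (∀ v : I, D (v : V)) → Set (Act i)) :
    (∀ v, D v) → Set (∀ i, Act i) :=
  fun s => {a | a i ∈ σi (Prj I s)}

/-!
Each agent's view of a run of the filtered LTS is a run of its projected LTS and an outcome of
its local shield, starting from a winning observation; so every observation along it lies in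
`RPrj (I i) (φ i)`, and by the definition of the restricted projection the global state itself
then lies in `φ i`.
-/

section Runs

variable {S A : Type*} {st : ℕ → S} {ac : ℕ → A}

theorem IsRun.of_filterTr {Tr : S → A → S → Prop} {F : S → Set A}
    (h : IsRun (FilterTr Tr F) st ac) : IsRun Tr st ac :=
  fun k => (h k).1

theorem IsRun.isOutcome_of_filterTr {Tr : S → A → S → Prop} {F : S → Set A}
    (h : IsRun (FilterTr Tr F) st ac) : IsOutcome F st ac :=
  fun k => (h k).2

theorem IsOutcome.of_iInter {ι : Type*} {F : ι → S → Set A}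
    (h : IsOutcome (fun s => ⋂ j, F j s) st ac) (j : ι) : IsOutcome (F j) st ac :=
  fun k => Set.mem_iInter.1 (h k) j

theorem safeRun_iInter {ι : Type*} {φ : ι → Set S} :
    SafeRun (⋂ i, φ i) st ↔ ∀ i, SafeRun (φ i) st := by
  simp only [SafeRun, Set.mem_iInter]
  exact forall_comm

end Runs

section Projection

variable {V : Type*} {D : V → Type*} {n : ℕ} {Act : Fin n → Type*}
  {st : ℕ → ∀ v, D v} {ac : ℕ → ∀ j, Act j}

theorem IsRun.projTr {Tr : (∀ v, D v) → (∀ j, Act j) → (∀ v, D v) → Prop}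
    (h : IsRun Tr st ac) (I : Set V) (i : Fin n) :
    IsRun (ProjTr Tr I i) (fun k => Prj I (st k)) (fun k => ac k i) :=
  fun k => ⟨st k, ac k, st (k + 1), h k, rfl, rfl, rfl⟩

theorem IsOutcome.of_extShield {I : Set V} {i : Fin n}
    {σi : (∀ v : I, D (v : V)) → Set (Act i)} (h : IsOutcome (ExtShield I i σi) st ac) :
    IsOutcome σi (fun k => Prj I (st k)) (fun k => ac k i) :=
  h

theorem SafeRun.of_rPrj {I : Set V} {φ : Set (∀ v, D v)}
    (h : SafeRun (RPrj I φ) (fun k => Prj I (st k))) : SafeRun φ st :=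
  fun k => h k (st k) rfl

end Projection

theorem projection_based_shield_synthesis_general
    {V : Type*} {D : V → Type*} {n : ℕ} {Act : Fin n → Type*}
    (Tr : (∀ v, D v) → (∀ i, Act i) → (∀ v, D v) → Prop)
    (I : Fin n → Set V) (φ : Fin n → Set (∀ v, D v))
    (σ : ∀ i : Fin n, (∀ v : I i, D (v : V)) → Set (Act i))
    (hσ : ∀ i, IsShield (ProjTr Tr (I i) i) (RPrj (I i) (φ i)) (σ i))
    (st : ℕ → ∀ v, D v) (ac : ℕ → ∀ j, Act j)
    (hrun : IsRun (FilterTr Tr (fun s => ⋂ i, ExtShield (I i) i (σ i) s)) st ac)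
    (hwin : ∀ i, WinningState (ProjTr Tr (I i) i) (RPrj (I i) (φ i)) (Prj (I i) (st 0))) :
    SafeRun (⋂ i, φ i) st := by
  refine safeRun_iInter.2 fun i => SafeRun.of_rPrj (I := I i) ?_
  have hlocal_run := hrun.of_filterTr.projTr (I i) i
  have hlocal_outcome := (hrun.isOutcome_of_filterTr.of_iInter i).of_extShield
  exact (hσ i).2 _ _ hlocal_run hlocal_outcome (hwin i)

/-- **Projection-based shield synthesis, Theorem 1.**
Let `φ = ⋂ i, φ i` be an `n`-agent safety property and, for each agent `i`, let
`σ i` be a local shield for the projected LTS `T^i` w.r.t. `RPrj (I i) (φ i)`.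
Then every run of the LTS filtered by `F s = ⋂ i, ext(σ i) s`, starting in a
state whose projections are winning in every `T^i`, is safe w.r.t. `φ`. -/
theorem projection_based_shield_synthesis
    {V : Type*} {D : V → Type*} {n : ℕ} {Act : Fin n → Type*}
    [Finite V] [∀ v, Finite (D v)] [∀ v, Nonempty (D v)] [∀ i, Finite (Act i)]
    (Tr : (∀ v, D v) → (∀ i, Act i) → (∀ v, D v) → Prop) (hT : NoDeadEnds Tr)
    (I : Fin n → Set V) (φ : Fin n → Set (∀ v, D v))
    (σ : ∀ i : Fin n, (∀ v : I i, D (v : V)) → Set (Act i))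
    (hσ : ∀ i, IsShield (ProjTr Tr (I i) i) (RPrj (I i) (φ i)) (σ i))
    (st : ℕ → ∀ v, D v) (ac : ℕ → ∀ j, Act j)
    (hrun : IsRun (FilterTr Tr (fun s => ⋂ i, ExtShield (I i) i (σ i) s)) st ac)
    (hwin : ∀ i, WinningState (ProjTr Tr (I i) i) (RPrj (I i) (φ i)) (Prj (I i) (st 0))) :
    SafeRun (⋂ i, φ i) st :=
  projection_based_shield_synthesis_general Tr I φ σ hσ st ac hrun hwin
end

section
/- (Assume-guarantee shield synthesis.) Let T be an n-agent LTS with projections prj_i and let φ = ∩_{i=1}^n φ_i be an n-agent safety property. For i = 1,...,n, let Θ_i denote the most permissive shield of T with respect to ∩_{j<i} φ_j (for i = 1 this is with respect to S, so T_{Θ_1} = T), and assume σ_i is a shield for the projected LTS (T_{Θ_i})^i with respect to r-prj_i(φ_i). Define the action filter F(s) = ∩_{i=1}^n ext(σ_i)(s) and assume F is a strategy of T (i.e., the composition ⊓_i ext(σ_i) exists). Then every run of the filtered LTS T_F starting in a state s such that, for every i, s is winning for ∩_{j<i} φ_j in T and prj_i(s) is winning for r-prj_i(φ_i) in (T_{Θ_i})^i,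 is safe with respect to φ. -/
/-- The most permissive shield for `φ`: the union of all shields for `φ`. -/
def MPS {S A : Type*} (Tr : S → A → S → Prop) (φ : Set S) : S → Set A :=
  fun s => {a | ∃ σ, IsShield Tr φ σ ∧ a ∈ σ s}

/-!
By strong induction on the agent `j`, a run of `T_F` from a state whose projections are winning
uses only actions of `Θ j`: every successor `s'` of such an action is winning for `⋂ l < j, φ l`,
with `F` itself as the winning strategy, since the local shields of the earlier agents keep the
projections of `s'` winning and the induction hypothesis then applies to the runs from `s'`.
So the run projects to an outcome of the shield `σ j` in `(T_{Θ j})^j`, which stays in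
`r-prj_j(φ j)`; hence the run stays in `φ j`.
-/

open Set

section LTS

variable {S A : Type*} {Tr : S → A → S → Prop} {φ : Set S}

lemma isRun_filterTr_iff {F : S → Set A} {st : ℕ → S} {ac : ℕ → A} :
    IsRun (FilterTr Tr F) st ac ↔ IsRun Tr st ac ∧ IsOutcome F st ac :=
  forall_and

lemma IsStrategy.exists_outcome {σ : S → Set A} (h : IsStrategy Tr σ) (s : S) :
    ∃ st ac, IsRun Tr st ac ∧ IsOutcome σ st ac ∧ st 0 = s := by
  choose a ha using fun t => (h t).1
  choose next hnext using fun t => (h t).2 (ha t)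
  let st : ℕ → S := fun k => next^[k] s
  refine ⟨st, fun k => a (st k), fun k => ?_, fun k => ha (st k), rfl⟩
  simpa only [st, Function.iterate_succ_apply'] using hnext (st k)

lemma WinningState.mem {s : S} (hw : WinningState Tr φ s) : s ∈ φ := by
  obtain ⟨σ, hσ, hsafe⟩ := hw
  obtain ⟨st, ac, hrun, hout, rfl⟩ := hσ.exists_outcome s
  exact hsafe st ac hrun hout rfl 0

lemma winningState_of_step {σ : S → Set A} (hσ : IsStrategy Tr σ) {t t' : S} {b : A}
    (hsafe : ∀ st ac, IsRun Tr st ac → IsOutcome σ st ac → st 0 = t → SafeRun φ st)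
    (hb : b ∈ σ t) (ht : Tr t b t') : WinningState Tr φ t' := by
  refine ⟨σ, hσ, fun st ac hrun hout h0 k => ?_⟩
  have hrun' : IsRun Tr (Nat.rec t fun k _ => st k) (Nat.rec b fun k _ => ac k) := by
    rintro (_ | k)
    · show Tr t b (st 0)
      rwa [h0]
    · exact hrun k
  have hout' : IsOutcome σ (Nat.rec t fun k _ => st k) (Nat.rec b fun k _ => ac k) := by
    rintro (_ | k)
    · exact hb
    · exact hout k
  exact hsafe _ _ hrun' hout' rfl (k + 1)

lemma IsShield.winningState_step {σ : S → Set A} (hσ : IsShield Tr φ σ) {t t' : S} {b : A}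
    (hw : WinningState Tr φ t) (hb : b ∈ σ t) (ht : Tr t b t') : WinningState Tr φ t' :=
  winningState_of_step hσ.1 (fun st ac hrun hout h0 => hσ.2 st ac hrun hout (h0 ▸ hw)) hb ht

lemma IsShield.winningState_run {σ : S → Set A} (hσ : IsShield Tr φ σ) {st : ℕ → S}
    {ac : ℕ → A} (hrun : IsRun Tr st ac) (hout : IsOutcome σ st ac)
    (hw : WinningState Tr φ (st 0)) (k : ℕ) : WinningState Tr φ (st k) := by
  induction k with
  | zero => exact hw
  | succ k ih => exact hσ.winningState_step ih (hout k) (hrun k)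

def winningPreservingMoves (Tr : S → A → S → Prop) (φ : Set S) : S → Set A :=
  fun t => {b ∈ Enabled Tr t | WinningState Tr φ t → ∀ t', Tr t b t' → WinningState Tr φ t'}

lemma isShield_winningPreservingMoves (hT : NoDeadEnds Tr) :
    IsShield Tr φ (winningPreservingMoves Tr φ) := by
  refine ⟨fun t => ⟨?_, fun b hb => hb.1⟩, fun st ac hrun hout hw k => ?_⟩
  · by_cases hwt : WinningState Tr φ t
    · obtain ⟨σ, hσ, hsafe⟩ := hwt
      obtain ⟨b, hb⟩ := (hσ t).1
      exact ⟨b, (hσ t).2 hb, fun _ _ ht => winningState_of_step hσ hsafe hb ht⟩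
    · obtain ⟨b, t', ht⟩ := hT t
      exact ⟨b, ⟨t', ht⟩, fun hw => absurd hw hwt⟩
  · suffices WinningState Tr φ (st k) from this.mem
    induction k with
    | zero => exact hw
    | succ k ih => exact (hout k).2 ih _ (hrun k)

lemma mem_MPS_of_forall_winningState (hT : NoDeadEnds Tr) {s : S} {a : A}
    (ha : a ∈ Enabled Tr s) (hsucc : ∀ s', Tr s a s' → WinningState Tr φ s') :
    a ∈ MPS Tr φ s :=
  ⟨_, isShield_winningPreservingMoves hT, ha, fun _ => hsucc⟩

end LTS

section Projection

variable {V : Type*} {D : V → Type*} {n : ℕ} {Act : Fin n → Type*}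

lemma projTr_prj {Tr : (∀ v, D v) → (∀ i, Act i) → (∀ v, D v) → Prop} (I : Set V) (i : Fin n)
    {s s' : ∀ v, D v} {a : ∀ i, Act i} (h : Tr s a s') :
    ProjTr Tr I i (Prj I s) (a i) (Prj I s') :=
  ⟨s, a, s', h, rfl, rfl, rfl⟩

lemma mem_of_prj_mem_rPrj {I : Set V} {φ : Set (∀ v, D v)} {s : ∀ v, D v}
    (h : Prj I s ∈ RPrj I φ) : s ∈ φ :=
  h s rfl

end Projection

section AssumeGuarantee

variable {V : Type*} {D : V → Type*} {n : ℕ} {Act : Fin n → Type*}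
  (Tr : (∀ v, D v) → (∀ i, Act i) → (∀ v, D v) → Prop)
  (I : Fin n → Set V) (φ : Fin n → Set (∀ v, D v))
  (σ : ∀ i : Fin n, (∀ v : I i, D (v : V)) → Set (Act i))

/-- The composition `⊓ i, ext(σ i)` of the extended local shields. -/
def composedShield : (∀ v, D v) → Set (∀ i, Act i) :=
  fun s => ⋂ i, ExtShield (I i) i (σ i) s

/-- `Θ j`: the most permissive shield for the guarantees of the agents before `j`. -/
def guaranteeShield (j : Fin n) : (∀ v, D v) → Set (∀ i, Act i) :=
  MPS Tr (⋂ l < j, φ l)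

/-- The projected LTS `(T_{Θ j})^j` of agent `j`. -/
def agentTr (j : Fin n) : (∀ v : I j, D (v : V)) → Act j → (∀ v : I j, D (v : V)) → Prop :=
  ProjTr (FilterTr Tr (guaranteeShield Tr φ j)) (I j) j

def LocallyWinning (j : Fin n) (s : ∀ v, D v) : Prop :=
  WinningState (agentTr Tr I φ j) (RPrj (I j) (φ j)) (Prj (I j) s)

variable {Tr I φ σ}

lemma LocallyWinning.mem {j : Fin n} {s : ∀ v, D v} (h : LocallyWinning Tr I φ j s) : s ∈ φ j :=
  mem_of_prj_mem_rPrj (WinningState.mem h)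

variable (hσ : ∀ j, IsShield (agentTr Tr I φ j) (RPrj (I j) (φ j)) (σ j))
include hσ

lemma LocallyWinning.step {j : Fin n} {s s' : ∀ v, D v} {a : ∀ i, Act i}
    (hw : LocallyWinning Tr I φ j s) (ha : a ∈ composedShield I σ s)
    (haΘ : a ∈ guaranteeShield Tr φ j s) (ht : Tr s a s') :
    LocallyWinning Tr I φ j s' :=
  (hσ j).winningState_step hw (mem_iInter.1 ha j) (projTr_prj (I j) j ⟨ht, haΘ⟩)

lemma locallyWinning_run {j : Fin n} {st : ℕ → ∀ v, D v} {ac : ℕ → ∀ i, Act i}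
    (hrun : IsRun (FilterTr Tr (composedShield I σ)) st ac)
    (hΘ : IsOutcome (guaranteeShield Tr φ j) st ac) (hw : LocallyWinning Tr I φ j (st 0))
    (k : ℕ) : LocallyWinning Tr I φ j (st k) := by
  induction k with
  | zero => exact hw
  | succ k ih => exact LocallyWinning.step hσ ih (hrun k).2 (hΘ k) (hrun k).1

variable (hT : NoDeadEnds Tr) (hF : IsStrategy Tr (composedShield I σ))
include hT hF

lemma isOutcome_guaranteeShield (j : Fin n) {st : ℕ → ∀ v, D v} {ac : ℕ → ∀ i, Act i}
    (hrun : IsRun (FilterTr Tr (composedShield I σ)) st ac)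
    (hw : ∀ l ≤ j, LocallyWinning Tr I φ l (st 0)) :
    IsOutcome (guaranteeShield Tr φ j) st ac := by
  induction j using WellFoundedLT.induction generalizing st ac with
  | ind j ih =>
  intro k
  have hΘ (l) (hl : l < j) : IsOutcome (guaranteeShield Tr φ l) st ac :=
    ih l hl hrun fun l' hl' => hw l' (hl'.trans hl.le)
  refine mem_MPS_of_forall_winningState hT ⟨_, (hrun k).1⟩ fun s' ht => ?_
  refine ⟨composedShield I σ, hF, fun st' ac' hrun' hout' h0 i => ?_⟩
  have hw' (l) (hl : l < j) : LocallyWinning Tr I φ l (st' 0) := h0 ▸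
    LocallyWinning.step hσ (locallyWinning_run hσ hrun (hΘ l hl) (hw l hl.le) k)
      (hrun k).2 (hΘ l hl k) ht
  have hrunF := isRun_filterTr_iff.2 ⟨hrun', hout'⟩
  refine mem_iInter₂.2 fun l hl => (locallyWinning_run hσ hrunF ?_ (hw' l hl) i).mem
  exact ih l hl hrunF fun l' hl' => hw' l' (hl'.trans_lt hl)

end AssumeGuarantee

theorem assume_guarantee_shield_synthesis_general
    {V : Type*} {D : V → Type*} {n : ℕ} {Act : Fin n → Type*}
    (Tr : (∀ v, D v) → (∀ i, Act i) → (∀ v, D v) → Prop) (hT : NoDeadEnds Tr)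
    (I : Fin n → Set V) (φ : Fin n → Set (∀ v, D v))
    (σ : ∀ i : Fin n, (∀ v : I i, D (v : V)) → Set (Act i))
    (hσ : ∀ i, IsShield
      (ProjTr (FilterTr Tr (MPS Tr (⋂ j < i, φ j))) (I i) i)
      (RPrj (I i) (φ i)) (σ i))
    (hF : IsStrategy Tr (fun s => ⋂ i, ExtShield (I i) i (σ i) s))
    (st : ℕ → ∀ v, D v) (ac : ℕ → ∀ j, Act j)
    (hrun : IsRun (FilterTr Tr (fun s => ⋂ i, ExtShield (I i) i (σ i) s)) st ac)
    (hwin : ∀ i, WinningState Tr (⋂ j < i, φ j) (st 0) ∧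
      WinningState (ProjTr (FilterTr Tr (MPS Tr (⋂ j < i, φ j))) (I i) i)
        (RPrj (I i) (φ i)) (Prj (I i) (st 0))) :
    SafeRun (⋂ i, φ i) st := by
  have hlocal (j : Fin n) : LocallyWinning Tr I φ j (st 0) := (hwin j).2
  intro k
  refine mem_iInter.2 fun j => (locallyWinning_run hσ hrun ?_ (hlocal j) k).mem
  exact isOutcome_guaranteeShield hσ hT hF j hrun fun l _ => hlocal l

/-- **Assume-guarantee shield synthesis, Theorem 2.**
Let `φ = ⋂ i, φ i` be an `n`-agent safety property.  For each agent `i`, let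
`Θ i` be the most permissive shield of `T` w.r.t. the guarantees `⋂ j < i, φ j`
of the previous agents, and let `σ i` be a shield for the projected LTS
`(T_{Θ i})^i` w.r.t. `RPrj (I i) (φ i)`.  If the composition
`F s = ⋂ i, ext(σ i) s` exists (is a strategy of `T`), then every run of the
filtered LTS `T_F`, starting in a state that is winning for each `⋂ j < i, φ j`
in `T` and whose projections are winning in each `(T_{Θ i})^i`, is safe
w.r.t. `φ`. -/
theorem assume_guarantee_shield_synthesis
    {V : Type*} {D : V → Type*} {n : ℕ} {Act : Fin n → Type*}
    [Finite V] [∀ v, Finite (D v)] [∀ v, Nonempty (D v)] [∀ i, Finite (Act i)]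
    (Tr : (∀ v, D v) → (∀ i, Act i) → (∀ v, D v) → Prop) (hT : NoDeadEnds Tr)
    (I : Fin n → Set V) (φ : Fin n → Set (∀ v, D v))
    (σ : ∀ i : Fin n, (∀ v : I i, D (v : V)) → Set (Act i))
    (hσ : ∀ i, IsShield
      (ProjTr (FilterTr Tr (MPS Tr (⋂ j < i, φ j))) (I i) i)
      (RPrj (I i) (φ i)) (σ i))
    (hF : IsStrategy Tr (fun s => ⋂ i, ExtShield (I i) i (σ i) s))
    (st : ℕ → ∀ v, D v) (ac : ℕ → ∀ j, Act j)
    (hrun : IsRun (FilterTr Tr (fun s => ⋂ i, ExtShield (I i) i (σ i) s)) st ac)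
    (hwin : ∀ i, WinningState Tr (⋂ j < i, φ j) (st 0) ∧
      WinningState (ProjTr (FilterTr Tr (MPS Tr (⋂ j < i, φ j))) (I i) i)
        (RPrj (I i) (φ i)) (Prj (I i) (st 0))) :
    SafeRun (⋂ i, φ i) st :=
  assume_guarantee_shield_synthesis_general Tr hT I φ σ hσ hF st ac hrun hwin
end
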